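/- Let X be a binomial random variable with parameters n and p where 0 ≤ p ≤ 1/4 and p·n ≥ 36. Then the contribution to the variance from the tail satisfies E[(X − pn)² · 1{|X − pn| ≥ 6√(pn)}] ≤ 0.01·p·n, and consequently E[(X − pn)² · 1{|X − pn| < 6√(pn)}] ≥ 0.74·p·n. -/

import Mathlib

/-!
Markov's inequality with the eighth central moment: on `|X - pn| ≥ 6√(pn)` we have
`(X - pn)² ≤ (X - pn)⁸ / (6√(pn))⁶ = (X - pn)⁸ / (46656 (pn)³)`. The eighth central moment follows
from the factorial moments `E[X(X-1)⋯(X-k+1)] = n(n-1)⋯(n-k+1) pᵏ`; for `p ≤ 1/4` and `pn ≥ 36`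
it is at most `175 (pn)⁴`, so the tail contributes at most `175/46656 · pn < 0.01 pn`. The core
part is the variance `pn(1 - p) ≥ 0.75 pn` minus the tail.
-/

open Finset

/-- The probability mass function of the binomial distribution B(n,p). -/
noncomputable def binomPMF (p : ℝ) (n k : ℕ) : ℝ :=
  (n.choose k : ℝ) * p ^ k * (1 - p) ^ (n - k)

theorem Nat.cast_descFactorial_eq_prod_range {R : Type*} [CommRing R] (a : ℕ) :
    ∀ k : ℕ, (a.descFactorial k : R) = ∏ j ∈ range k, ((a : R) - j)
  | 0 => by simp
  | k + 1 => by
    rw [Nat.descFactorial_succ, prod_range_succ, ← Nat.cast_descFactorial_eq_prod_range a k]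
    rcases le_or_gt k a with h | h
    · rw [Nat.cast_mul, Nat.cast_sub h, mul_comm]
    · simp [Nat.descFactorial_eq_zero_iff_lt.2 h]

theorem Nat.descFactorial_mul_choose_eq {n i k : ℕ} (hki : k ≤ i) :
    i.descFactorial k * n.choose i = n.descFactorial k * (n - k).choose (i - k) := by
  rw [Nat.descFactorial_eq_factorial_mul_choose, Nat.descFactorial_eq_factorial_mul_choose,
    mul_assoc, mul_assoc, mul_comm (i.choose k), Nat.choose_mul hki]

section binomPMF

variable (p : ℝ) (n : ℕ)

theorem binomPMF_nonneg (hp0 : 0 ≤ p) (hp1 : p ≤ 1) (k : ℕ) : 0 ≤ binomPMF p n k := by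
  have : 0 ≤ 1 - p := by linarith
  unfold binomPMF
  positivity

theorem sum_binomPMF : ∑ i ∈ range (n + 1), binomPMF p n i = 1 := by
  have h := add_pow p (1 - p) n
  rw [add_sub_cancel, one_pow] at h
  rw [h]
  exact sum_congr rfl fun i _ => by unfold binomPMF; ring

theorem descFactorial_mul_binomPMF {k i : ℕ} (hki : k ≤ i) :
    (i.descFactorial k : ℝ) * binomPMF p n i
      = n.descFactorial k * p ^ k * binomPMF p (n - k) (i - k) := by
  have hchoose : (i.descFactorial k : ℝ) * n.choose i = n.descFactorial k * (n - k).choose (i - k) :=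
    mod_cast Nat.descFactorial_mul_choose_eq hki
  obtain ⟨j, rfl⟩ := Nat.exists_eq_add_of_le hki
  rw [Nat.add_sub_cancel_left] at hchoose ⊢
  unfold binomPMF
  rw [show n - (k + j) = n - k - j by omega, pow_add]
  linear_combination (p ^ k * p ^ j * (1 - p) ^ (n - k - j)) * hchoose

theorem sum_descFactorial_mul_binomPMF (k : ℕ) :
    ∑ i ∈ range (n + 1), (i.descFactorial k : ℝ) * binomPMF p n i = n.descFactorial k * p ^ k := by
  rcases lt_or_ge n k with hnk | hkn
  · rw [Nat.descFactorial_eq_zero_iff_lt.2 hnk, Nat.cast_zero, zero_mul]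
    refine sum_eq_zero fun i hi => ?_
    rw [Nat.descFactorial_eq_zero_iff_lt.2 (by grind), Nat.cast_zero, zero_mul]
  · have hsplit : n + 1 = k + (n - k + 1) := by omega
    have hlow : ∑ i ∈ range k, (i.descFactorial k : ℝ) * binomPMF p n i = 0 :=
      sum_eq_zero fun i hi => by
        rw [Nat.descFactorial_eq_zero_iff_lt.2 (mem_range.1 hi), Nat.cast_zero, zero_mul]
    rw [hsplit, sum_range_add, hlow, zero_add]
    simp_rw [descFactorial_mul_binomPMF p n (Nat.le_add_right k _), Nat.add_sub_cancel_left,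
      ← mul_sum, sum_binomPMF, mul_one]

theorem sum_sq_sub_mul_binomPMF :
    ∑ i ∈ range (n + 1), ((i : ℝ) - p * n) ^ 2 * binomPMF p n i = p * n * (1 - p) := by
  have hexpand : ∀ i ∈ range (n + 1), ((i : ℝ) - p * n) ^ 2 * binomPMF p n i
      = (p * n) ^ 2 * ((i.descFactorial 0 : ℝ) * binomPMF p n i)
        + (1 - 2 * (p * n)) * ((i.descFactorial 1 : ℝ) * binomPMF p n i)
        + (i.descFactorial 2 : ℝ) * binomPMF p n i := by
    intro i _
    simp only [Nat.cast_descFactorial_eq_prod_range, prod_range_succ, prod_range_zero]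
    ring
  rw [sum_congr rfl hexpand]
  simp only [sum_add_distrib, ← mul_sum, sum_descFactorial_mul_binomPMF]
  simp only [Nat.cast_descFactorial_eq_prod_range, prod_range_succ, prod_range_zero]
  ring

theorem sum_pow_eight_sub_mul_binomPMF :
    ∑ i ∈ range (n + 1), ((i : ℝ) - p * n) ^ 8 * binomPMF p n i
      = p * n * (1 - 127 * p + 1932 * p ^ 2 - 10206 * p ^ 3 + 25200 * p ^ 4 - 31920 * p ^ 5
            + 20160 * p ^ 6 - 5040 * p ^ 7)
        + (p * n) ^ 2 * (119 - 2394 * p + 13895 * p ^ 2 - 35700 * p ^ 3 + 46004 * p ^ 4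
            - 29232 * p ^ 5 + 7308 * p ^ 6)
        + (p * n) ^ 3 * (490 - 3850 * p + 10990 * p ^ 2 - 14770 * p ^ 3 + 9520 * p ^ 4
            - 2380 * p ^ 5)
        + 105 * (p * n) ^ 4 * (1 - p) ^ 4 := by
  set m := p * n
  -- `(x - m)⁸ = ∑ₖ cₖ x(x-1)⋯(x-k+1)` with `cₖ = ∑ⱼ C(8,j) (-m)^(8-j) S(j,k)`, `S` the Stirling
  -- numbers of the second kind.
  have hexpand : ∀ i ∈ range (n + 1), ((i : ℝ) - m) ^ 8 * binomPMF p n i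
      = m ^ 8 * ((i.descFactorial 0 : ℝ) * binomPMF p n i)
        + (1 - 8 * m + 28 * m ^ 2 - 56 * m ^ 3 + 70 * m ^ 4 - 56 * m ^ 5 + 28 * m ^ 6 - 8 * m ^ 7)
            * ((i.descFactorial 1 : ℝ) * binomPMF p n i)
        + (127 - 504 * m + 868 * m ^ 2 - 840 * m ^ 3 + 490 * m ^ 4 - 168 * m ^ 5 + 28 * m ^ 6)
            * ((i.descFactorial 2 : ℝ) * binomPMF p n i)
        + (966 - 2408 * m + 2520 * m ^ 2 - 1400 * m ^ 3 + 420 * m ^ 4 - 56 * m ^ 5)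
            * ((i.descFactorial 3 : ℝ) * binomPMF p n i)
        + (1701 - 2800 * m + 1820 * m ^ 2 - 560 * m ^ 3 + 70 * m ^ 4)
            * ((i.descFactorial 4 : ℝ) * binomPMF p n i)
        + (1050 - 1120 * m + 420 * m ^ 2 - 56 * m ^ 3) * ((i.descFactorial 5 : ℝ) * binomPMF p n i)
        + (266 - 168 * m + 28 * m ^ 2) * ((i.descFactorial 6 : ℝ) * binomPMF p n i)
        + (28 - 8 * m) * ((i.descFactorial 7 : ℝ) * binomPMF p n i)
        + (i.descFactorial 8 : ℝ) * binomPMF p n i := by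
    intro i _
    simp only [Nat.cast_descFactorial_eq_prod_range, prod_range_succ, prod_range_zero]
    ring
  rw [sum_congr rfl hexpand]
  simp only [sum_add_distrib, ← mul_sum, sum_descFactorial_mul_binomPMF]
  simp only [Nat.cast_descFactorial_eq_prod_range, prod_range_succ, prod_range_zero, m]
  ring

theorem sum_pow_eight_sub_mul_binomPMF_le (hp0 : 0 ≤ p) (hp : p ≤ 1 / 4) (hpn : 36 ≤ p * n) :
    ∑ i ∈ range (n + 1), ((i : ℝ) - p * n) ^ 8 * binomPMF p n i ≤ 175 * (p * n) ^ 4 := by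
  rw [sum_pow_eight_sub_mul_binomPMF]
  set m := p * n
  have hp2 : p ^ 2 ≤ 1 / 16 := by nlinarith
  have hp3 : p ^ 3 ≤ 1 / 64 := by nlinarith
  have hp4 : p ^ 4 ≤ 1 / 256 := by nlinarith
  have hp5 : p ^ 5 ≤ 1 / 1024 := by nlinarith
  have hp6 : p ^ 6 ≤ 1 / 4096 := by nlinarith
  have h1 : 1 - 127 * p + 1932 * p ^ 2 - 10206 * p ^ 3 + 25200 * p ^ 4 - 31920 * p ^ 5
      + 20160 * p ^ 6 - 5040 * p ^ 7 ≤ 450 := by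
    linarith [pow_nonneg hp0 3, pow_nonneg hp0 5, pow_nonneg hp0 7]
  have h2 : 119 - 2394 * p + 13895 * p ^ 2 - 35700 * p ^ 3 + 46004 * p ^ 4 - 29232 * p ^ 5
      + 7308 * p ^ 6 ≤ 2400 := by
    linarith [pow_nonneg hp0 3, pow_nonneg hp0 5]
  have h3 : 490 - 3850 * p + 10990 * p ^ 2 - 14770 * p ^ 3 + 9520 * p ^ 4 - 2380 * p ^ 5
      ≤ 2450 := by
    linarith [pow_nonneg hp0 3, pow_nonneg hp0 5]
  have h4 : (1 - p) ^ 4 ≤ 1 := pow_le_one₀ (by linarith) (by linarith)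
  have hm : 0 ≤ m := by linarith
  have hm2 : 36 * m ≤ m ^ 2 := by nlinarith
  have hm3 : 36 * m ^ 2 ≤ m ^ 3 := by nlinarith
  have hm4 : 36 * m ^ 3 ≤ m ^ 4 := by nlinarith
  nlinarith [mul_le_mul_of_nonneg_left h1 hm, mul_le_mul_of_nonneg_left h2 (sq_nonneg m),
    mul_le_mul_of_nonneg_left h3 (pow_nonneg hm 3),
    mul_le_mul_of_nonneg_left h4 (pow_nonneg hm 4)]

end binomPMF

section TruncatedSums

variable {ι : Type*} (s : Finset ι) (x : ι → ℝ)

theorem sum_ite_le_abs_sq_mul_le {w : ι → ℝ} (hw : ∀ i ∈ s, 0 ≤ w i) {t : ℝ} (ht : 0 < t)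
    (k : ℕ) :
    ∑ i ∈ s, (if t ≤ |x i| then x i ^ 2 * w i else 0)
      ≤ (∑ i ∈ s, x i ^ (2 * k + 2) * w i) / t ^ (2 * k) := by
  rw [sum_div]
  refine sum_le_sum fun i hi => ?_
  have hwi := hw i hi
  rw [show x i ^ (2 * k + 2) = x i ^ 2 * (x i ^ 2) ^ k by ring, pow_mul]
  split_ifs with hti
  · have ht2 : t ^ 2 ≤ x i ^ 2 := by
      rw [← sq_abs (x i)]
      exact pow_le_pow_left₀ ht.le hti 2
    rw [le_div_iff₀ (by positivity), mul_right_comm]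
    gcongr
  · positivity

theorem sum_ite_le_abs_add_sum_ite_abs_lt (f : ι → ℝ) (t : ℝ) :
    ∑ i ∈ s, (if t ≤ |x i| then f i else 0) + ∑ i ∈ s, (if |x i| < t then f i else 0)
      = ∑ i ∈ s, f i := by
  rw [← sum_add_distrib]
  refine sum_congr rfl fun i _ => ?_
  by_cases hti : t ≤ |x i|
  · rw [if_pos hti, if_neg (not_lt.2 hti), add_zero]
  · rw [if_neg hti, if_pos (not_le.1 hti), zero_add]

end TruncatedSums

/-- For `X ~ B(n,p)` with `0 ≤ p ≤ 1/4` and `p·n ≥ 36`, the tail contribution to the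
variance satisfies `E[(X - pn)²·1{|X - pn| ≥ 6√(pn)}] ≤ 0.01·p·n`, and consequently
`E[(X - pn)²·1{|X - pn| < 6√(pn)}] ≥ 0.74·p·n`. -/
theorem binomial_variance_tail (p : ℝ) (n : ℕ) (hp0 : 0 ≤ p) (hp : p ≤ 1 / 4)
    (hpn : 36 ≤ p * n) :
    (∑ i ∈ Finset.range (n + 1),
        if 6 * Real.sqrt (p * n) ≤ |(i : ℝ) - p * n| then
          ((i : ℝ) - p * n) ^ 2 * binomPMF p n i else 0) ≤ 0.01 * (p * n)
    ∧ 0.74 * (p * n) ≤ ∑ i ∈ Finset.range (n + 1),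
        if |(i : ℝ) - p * n| < 6 * Real.sqrt (p * n) then
          ((i : ℝ) - p * n) ^ 2 * binomPMF p n i else 0 := by
  set m := p * n
  have hm : 0 < m := by linarith
  have hthreshold : (6 * Real.sqrt m) ^ (2 * 3) = 46656 * m ^ 3 := by
    rw [pow_mul, mul_pow, Real.sq_sqrt hm.le]
    ring
  have htail : (∑ i ∈ range (n + 1), if 6 * Real.sqrt m ≤ |(i : ℝ) - m| then
      ((i : ℝ) - m) ^ 2 * binomPMF p n i else 0) ≤ 0.01 * m := by
    refine (sum_ite_le_abs_sq_mul_le _ _ (fun i _ => binomPMF_nonneg p n hp0 (by linarith) i)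
      (by positivity) 3).trans ?_
    rw [hthreshold, div_le_iff₀ (by positivity)]
    nlinarith [sum_pow_eight_sub_mul_binomPMF_le p n hp0 hp hpn, pow_pos hm 4]
  refine ⟨htail, ?_⟩
  have hsplit := sum_ite_le_abs_add_sum_ite_abs_lt (range (n + 1)) (fun i => (i : ℝ) - m)
    (fun i => ((i : ℝ) - m) ^ 2 * binomPMF p n i) (6 * Real.sqrt m)
  rw [sum_sq_sub_mul_binomPMF] at hsplit
  have hvariance : 0.75 * m ≤ m * (1 - p) := by nlinarith
  linarith
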